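/- arXiv:0810.5488 — 3 statements merged into one kernel-verified Lean document; each statement's English description precedes it below -/
import Mathlib

section
/- Let Ω : ℝ → Matrix (Fin n) (Fin n) ℂ and suppose Ω has derivative D at the point t (HasDerivAt Ω D t). Then the map s ↦ exp(Ω s) has derivative at t equal to ∫_{x∈[0,1]} exp(x • Ω t) * D * exp((1−x) • Ω t) dx. -/
/-!
Differentiating `x ↦ exp (x • B) * exp ((1 - x) • A)` gives Duhamel's formula
`exp B - exp A = ∫ x in 0..1, exp (x • B) * (B - A) * exp ((1 - x) • A)`. With `A = Ω t` and
`B = Ω s` it writes the difference quotient of `exp ∘ Ω` at `t` as the same integral, with `B - A`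
replaced by the difference quotient of `Ω`. The integral depends continuously on `B` and on that
quotient, so the limit `s → t` can be taken inside it.
-/

open scoped Matrix.Norms.L2Operator

open NormedSpace Filter Topology

section BanachAlgebra

variable {𝔸 : Type*} [NormedRing 𝔸] [NormedAlgebra ℝ 𝔸] [CompleteSpace 𝔸]

@[fun_prop]
theorem continuous_exp_of_normedAlgebra_real : Continuous (exp : 𝔸 → 𝔸) :=
  continuous_iff_continuousAt.2 fun A => (exp_analytic (𝕂 := ℝ) A).continuousAt

theorem exp_sub_exp_eq_integral (A B : 𝔸) :
    exp B - exp A = ∫ x in (0:ℝ)..1, exp (x • B) * (B - A) * exp ((1 - x) • A) := by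
  have hderiv (x : ℝ) : HasDerivAt (fun x : ℝ => exp (x • B) * exp ((1 - x) • A))
      (exp (x • B) * (B - A) * exp ((1 - x) • A)) x := by
    have hA : HasDerivAt (fun x : ℝ => exp ((1 - x) • A)) (-(A * exp ((1 - x) • A))) x := by
      simpa [Function.comp_def] using
        (hasDerivAt_exp_smul_const' A (1 - x)).scomp x ((hasDerivAt_id x).const_sub 1)
    refine ((hasDerivAt_exp_smul_const B x).mul hA).congr_deriv ?_
    noncomm_ring
  rw [intervalIntegral.integral_eq_sub_of_hasDerivAt (fun x _ => hderiv x)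
    (by apply Continuous.intervalIntegrable; fun_prop)]
  simp

theorem continuous_integral_exp_smul_mul_mul_exp_smul (A : 𝔸) :
    Continuous fun p : 𝔸 × 𝔸 => ∫ x in (0:ℝ)..1, exp (x • p.1) * p.2 * exp ((1 - x) • A) :=
  intervalIntegral.continuous_parametric_intervalIntegral_of_continuous' (by fun_prop) 0 1

theorem hasDerivAt_exp_comp_integral {Ω : ℝ → 𝔸} {D : 𝔸} {t : ℝ} (hΩ : HasDerivAt Ω D t) :
    HasDerivAt (fun s => exp (Ω s))
      (∫ x in (0:ℝ)..1, exp (x • Ω t) * D * exp ((1 - x) • Ω t)) t := by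
  have hslope : slope (fun s => exp (Ω s)) t = fun s =>
      ∫ x in (0:ℝ)..1, exp (x • Ω s) * slope Ω t s * exp ((1 - x) • Ω t) := by
    funext s
    simp only [slope_def_module, exp_sub_exp_eq_integral (Ω t) (Ω s),
      ← intervalIntegral.integral_smul, mul_smul_comm, smul_mul_assoc]
  rw [hasDerivAt_iff_tendsto_slope, hslope]
  have hlim : Tendsto (fun s => (Ω s, slope Ω t s)) (𝓝[≠] t) (𝓝 (Ω t, D)) :=
    (hΩ.continuousAt.tendsto.mono_left nhdsWithin_le_nhds).prodMk_nhds
      (hasDerivAt_iff_tendsto_slope.1 hΩ)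
  exact ((continuous_integral_exp_smul_mul_mul_exp_smul (Ω t)).tendsto _).comp hlim

end BanachAlgebra

/-- The derivative of the matrix exponential along a path, integral form: if `Ω` has derivative
`D` at `t`, then `s ↦ exp (Ω s)` has derivative `∫ x in [0,1], exp (x • Ω t) * D * exp ((1-x) • Ω t)`
at `t`. -/
theorem exp_hasDerivAt_integral {n : ℕ} (Ω : ℝ → Matrix (Fin n) (Fin n) ℂ)
    (D : Matrix (Fin n) (Fin n) ℂ) (t : ℝ) (hΩ : HasDerivAt Ω D t) :
    HasDerivAt (fun s : ℝ => NormedSpace.exp (Ω s))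
      (∫ x in (0:ℝ)..1,
        NormedSpace.exp (x • Ω t) * D * NormedSpace.exp ((1 - x) • Ω t)) t :=
  hasDerivAt_exp_comp_integral hΩ
end

section
/- Let Ω be an n×n complex matrix with ‖Ω‖ < π in the ℓ² operator (spectral) norm. Then for every n×n complex matrix C, ∑'_{j≥0} (1/(j+1)!) • ad_Ω^j ( ∑'_{k≥0} ((B_k : ℝ)/k!) • ad_Ω^k C ) = C; that is, the operator d exp_Ω = ∑_{j≥0} (1/(j+1)!) ad_Ω^j composed with d exp_Ω^{−1} = ∑_{k≥0} (B_k/k!) ad_Ω^k is the identity. -/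
/-!
The generating functions `(eˣ - 1)/x = ∑ xʲ/(j+1)!` and `x/(eˣ - 1) = ∑ Bₖ xᵏ/k!` are inverse
power series, so the Cauchy product of their coefficient sequences is `δ_{m,0}`. Euler's formula
for `ζ(2m)` together with `ζ(2m) ≤ ζ(2) < 2` gives `|Bₖ|/k! ≤ 4/(2π)ᵏ`, so both series converge
absolutely at every element of norm `< 2π` of a real Banach algebra, where their product is
therefore `1`. Apply this to `ad_Ω` acting on matrices, whose operator norm is at most
`2‖Ω‖ < 2π`.
-/

open Real Finset PowerSeries
open scoped Nat

theorem sum_antidiagonal_inv_factorial_succ_mul_bernoulli_div_factorial (m : ℕ) :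
    ∑ p ∈ antidiagonal m, (1 / (p.1 + 1)! : ℝ) * ((bernoulli p.2 : ℝ) / p.2 !) =
      if m = 0 then 1 else 0 := by
  have h := congrArg (coeff (m + 1))
    ((mul_comm _ _).trans (bernoulliPowerSeries_mul_exp_sub_one ℝ))
  rw [coeff_mul, Finset.Nat.sum_antidiagonal_succ, coeff_X] at h
  simpa [bernoulliPowerSeries, coeff_exp] using h

theorem abs_bernoulli_two_mul_div_factorial_le {m : ℕ} (hm : m ≠ 0) :
    |(bernoulli (2 * m) : ℝ)| / (2 * m)! ≤ 4 / (2 * π) ^ (2 * m) := by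
  have hζ := hasSum_zeta_nat hm
  set ζ := (-1 : ℝ) ^ (m + 1) * 2 ^ (2 * m - 1) * π ^ (2 * m) * bernoulli (2 * m) / (2 * m)!
  have hζ_nonneg : 0 ≤ ζ := hζ.nonneg fun k => by positivity
  have hζ_le : ζ ≤ π ^ 2 / 6 := by
    refine hasSum_le (fun k => ?_) hζ hasSum_zeta_two
    rcases k.eq_zero_or_pos with rfl | hk
    · simp [hm]
    · gcongr
      · exact_mod_cast hk
      · omega
  have h_two_pi : (2 * π) ^ (2 * m) = 2 * 2 ^ (2 * m - 1) * π ^ (2 * m) := by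
    rw [mul_pow, ← pow_succ' (2 : ℝ), Nat.sub_add_cancel (by omega)]
  have h_abs : |(bernoulli (2 * m) : ℝ)| / (2 * m)! * (2 * π) ^ (2 * m) = 2 * ζ := by
    rw [← abs_of_nonneg hζ_nonneg, h_two_pi]
    simp only [ζ, abs_div, abs_mul, abs_pow, abs_neg, abs_one, one_pow, abs_of_pos pi_pos,
      abs_two, Nat.abs_cast]
    ring
  rw [le_div_iff₀ (by positivity), h_abs]
  nlinarith [pi_lt_d2, pi_pos]

theorem abs_bernoulli_div_factorial_le (k : ℕ) :
    |(bernoulli k : ℝ)| / k ! ≤ 4 / (2 * π) ^ k := by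
  rcases k.even_or_odd with ⟨m, rfl⟩ | hodd
  · rcases eq_or_ne m 0 with rfl | hm
    · norm_num
    · rw [← two_mul]
      exact abs_bernoulli_two_mul_div_factorial_le hm
  · rcases eq_or_ne k 1 with rfl | hk
    · rw [div_le_div_iff₀ (by positivity) (by positivity)]
      norm_num [bernoulli_one]
      linarith [pi_le_four]
    · rw [bernoulli_eq_bernoulli'_of_ne_one hk, bernoulli'_eq_zero_of_odd hodd (by grind)]
      simp only [Rat.cast_zero, abs_zero, zero_div]
      positivity

theorem summable_abs_inv_factorial_succ_mul_pow (r : ℝ) :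
    Summable fun k : ℕ => |(1 / (k + 1)! : ℝ)| * r ^ k := by
  refine Summable.of_norm_bounded (Real.summable_pow_div_factorial |r|) fun k => ?_
  rw [Real.norm_eq_abs, abs_mul, abs_abs, abs_pow, abs_of_pos (by positivity), one_div,
    div_eq_inv_mul]
  gcongr
  exact k.le_succ

theorem summable_abs_bernoulli_div_factorial_mul_pow {r : ℝ} (hr₀ : 0 ≤ r) (hr : r < 2 * π) :
    Summable fun k : ℕ => |(bernoulli k : ℝ) / k !| * r ^ k := by
  have h2π : 0 < 2 * π := by positivity
  refine Summable.of_nonneg_of_le (fun k => by positivity) (fun k => ?_)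
    ((summable_geometric_of_lt_one (by positivity) ((div_lt_one h2π).mpr hr)).mul_left 4)
  calc |(bernoulli k : ℝ) / k !| * r ^ k
      ≤ 4 / (2 * π) ^ k * r ^ k := by
        rw [abs_div, Nat.abs_cast]
        exact mul_le_mul_of_nonneg_right (abs_bernoulli_div_factorial_le k) (by positivity)
    _ = 4 * (r / (2 * π)) ^ k := by rw [div_pow]; ring

section BanachAlgebra

variable {R : Type*} [NormedRing R] [NormedAlgebra ℝ R]

theorem summable_norm_smul_pow {a : ℕ → ℝ} {x : R}
    (ha : Summable fun k => |a k| * ‖x‖ ^ k) : Summable fun k => ‖a k • x ^ k‖ := by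
  refine (summable_nat_add_iff 1).mp <| Summable.of_nonneg_of_le (fun _ => norm_nonneg _)
    (fun k => ?_) ((summable_nat_add_iff 1).mpr ha)
  rw [norm_smul, Real.norm_eq_abs]
  gcongr
  exact norm_pow_le' x k.succ_pos

variable [CompleteSpace R]

theorem tsum_smul_pow_mul_tsum_smul_pow {a b : ℕ → ℝ} {x : R}
    (ha : Summable fun k => ‖a k • x ^ k‖) (hb : Summable fun k => ‖b k • x ^ k‖) :
    (∑' k, a k • x ^ k) * ∑' k, b k • x ^ k =
      ∑' m, (∑ p ∈ antidiagonal m, a p.1 * b p.2) • x ^ m := by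
  rw [tsum_mul_tsum_eq_tsum_sum_antidiagonal_of_summable_norm ha hb]
  refine tsum_congr fun m => ?_
  rw [Finset.sum_smul]
  refine Finset.sum_congr rfl fun p hp => ?_
  rw [smul_mul_smul_comm, ← pow_add, mem_antidiagonal.mp hp]

theorem tsum_inv_factorial_succ_smul_pow_mul_tsum_bernoulli_smul_pow {x : R}
    (hx : ‖x‖ < 2 * π) :
    (∑' j : ℕ, (1 / (j + 1)! : ℝ) • x ^ j) * ∑' k : ℕ, ((bernoulli k : ℝ) / k !) • x ^ k = 1 := by
  rw [tsum_smul_pow_mul_tsum_smul_pow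
      (summable_norm_smul_pow (summable_abs_inv_factorial_succ_mul_pow _))
      (summable_norm_smul_pow (summable_abs_bernoulli_div_factorial_mul_pow (norm_nonneg x) hx)),
    tsum_eq_single 0 fun m hm => by
      rw [sum_antidiagonal_inv_factorial_succ_mul_bernoulli_div_factorial, if_neg hm, zero_smul]]
  simp

end BanachAlgebra

section Commutator

variable (𝕜 : Type*) [NontriviallyNormedField 𝕜] {A : Type*} [NormedRing A] [NormedAlgebra 𝕜 A]

noncomputable def adCLM (a : A) : A →L[𝕜] A :=
  ContinuousLinearMap.mul 𝕜 A a - (ContinuousLinearMap.mul 𝕜 A).flip a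

theorem coe_adCLM_pow (a : A) (k : ℕ) : ⇑(adCLM 𝕜 a ^ k) = (fun X => a * X - X * a)^[k] := by
  rw [FunLike.coe_pow_eq_iterate]
  rfl

theorem norm_adCLM_le (a : A) : ‖adCLM 𝕜 a‖ ≤ 2 * ‖a‖ := by
  have h_right : ‖(ContinuousLinearMap.mul 𝕜 A).flip a‖ ≤ ‖a‖ :=
    ContinuousLinearMap.opNorm_le_bound _ (norm_nonneg a) fun X =>
      (norm_mul_le X a).trans_eq (mul_comm _ _)
  calc ‖adCLM 𝕜 a‖ ≤ ‖ContinuousLinearMap.mul 𝕜 A a‖ + ‖(ContinuousLinearMap.mul 𝕜 A).flip a‖ :=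
        norm_sub_le _ _
    _ ≤ 2 * ‖a‖ := by linarith [ContinuousLinearMap.opNorm_mul_apply_le 𝕜 A a]

end Commutator

open scoped Matrix.Norms.L2Operator

/-- If `‖Ω‖ < π` (ℓ² operator norm), then the operator `d exp_Ω = ∑_{j≥0} (1/(j+1)!) ad_Ω^j`
composed with `d exp_Ω⁻¹ = ∑_{k≥0} (B_k/k!) ad_Ω^k` is the identity. -/
theorem dexp_comp_dexpinv {n : ℕ} (Ω : Matrix (Fin n) (Fin n) ℂ) (hΩ : ‖Ω‖ < Real.pi)
    (C : Matrix (Fin n) (Fin n) ℂ) :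
    ∑' j : ℕ, ((1 : ℝ) / (Nat.factorial (j + 1))) •
      (fun X : Matrix (Fin n) (Fin n) ℂ => Ω * X - X * Ω)^[j]
        (∑' k : ℕ, (((bernoulli k : ℚ) : ℝ) / (Nat.factorial k)) •
          (fun X : Matrix (Fin n) (Fin n) ℂ => Ω * X - X * Ω)^[k] C) = C := by
  set ad := adCLM ℂ Ω
  have had : ‖ad‖ < 2 * π := (norm_adCLM_le ℂ Ω).trans_lt (by linarith)
  have tsum_smul_pow_apply {c : ℕ → ℝ} (hc : Summable fun k => |c k| * ‖ad‖ ^ k) (X : _) :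
      ∑' k, c k • (ad ^ k) X = (∑' k, c k • ad ^ k) X := by
    simpa only [pow_apply_eq_iterate, ContinuousLinearMap.map_smul_of_tower,
      ContinuousLinearMap.apply_apply] using
      ((ContinuousLinearMap.apply ℂ _ X).map_tsum (summable_norm_smul_pow hc).of_norm).symm
  simp only [← coe_adCLM_pow ℂ]
  rw [tsum_smul_pow_apply (summable_abs_bernoulli_div_factorial_mul_pow (norm_nonneg _) had),
    tsum_smul_pow_apply (summable_abs_inv_factorial_succ_mul_pow _), ← mul_apply_eq_comp,
    tsum_inv_factorial_succ_smul_pow_mul_tsum_bernoulli_smul_pow had, one_apply_eq_self]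
end

section
/- Let Ω be an n×n complex matrix such that for all eigenvalues λ, μ of Ω and every nonzero integer m, λ − μ ≠ 2πim. Then the linear map d exp_Ω : X ↦ ∑'_{k≥0} (1/(k+1)!) • ad_Ω^k X on n×n complex matrices is bijective. -/
/-!
Write `f(z) = (exp z - 1) / z = ∑ z^k / (k+1)!`, an entire function whose zeros are exactly the
points `2πim` with `m ≠ 0`. The map in question is `f(ad_Ω)`, and it commutes with `ad_Ω`, so its
kernel is `ad_Ω`-invariant; if it were nonzero it would contain an eigenvector `W` of `ad_Ω`, with
eigenvalue `ν` say, and then `0 = f(ad_Ω) W = f(ν) W` forces `ν ∈ 2πi(ℤ \ {0})`. But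
`Ω W - W Ω = ν W` means `(Ω - ν) W = W Ω`, and a nonzero solution of such a Sylvester equation
forces `Ω - ν` and `Ω` to share an eigenvalue, so `ν` is a difference of two eigenvalues of `Ω`.
Injectivity gives bijectivity in finite dimension.
-/

open Polynomial
open scoped Nat

theorem SemiconjBy.aeval {R A : Type*} [CommSemiring R] [Semiring A] [Algebra R A] {a x y : A}
    (h : SemiconjBy a x y) (p : R[X]) : SemiconjBy a (aeval x p) (aeval y p) := by
  induction p using Polynomial.induction_on' with
  | add p q hp hq => simpa only [map_add] using hp.add_right hq
  | monomial k r =>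
    simpa only [aeval_monomial] using
      SemiconjBy.mul_right (Algebra.commute_algebraMap_right r a) (h.pow_right k)

namespace Matrix

variable {K ι : Type*} [Field K] [IsAlgClosed K] [Fintype ι] [DecidableEq ι]

theorem exists_mem_spectrum_of_mul_eq_mul {A B X : Matrix ι ι K} (hX : X ≠ 0)
    (h : A * X = X * B) : ∃ μ ∈ spectrum K A, μ ∈ spectrum K B := by
  have : Nonempty ι := by
    by_contra hι
    exact hX (ext fun i => (hι ⟨i⟩).elim)
  have hp : aeval A B.charpoly * X = 0 := by
    rw [← (SemiconjBy.aeval h.symm B.charpoly).eq, aeval_self_charpoly, mul_zero]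
  have hzero : (0 : K) ∈ spectrum K (aeval A B.charpoly) := by
    rw [spectrum.zero_mem_iff]
    exact fun hu => hX (hu.mul_right_eq_zero.mp hp)
  rw [spectrum.map_polynomial_aeval_of_nonempty A _
    (spectrum.nonempty_of_isAlgClosed_of_finiteDimensional K A)] at hzero
  obtain ⟨μ, hμA, hμB⟩ := hzero
  exact ⟨μ, hμA, mem_spectrum_iff_isRoot_charpoly.mpr hμB⟩

theorem exists_sub_eq_of_mul_sub_mul_eq_smul {Ω W : Matrix ι ι K} {ν : K} (hW : W ≠ 0)
    (h : Ω * W - W * Ω = ν • W) : ∃ l ∈ spectrum K Ω, ∃ m ∈ spectrum K Ω, l - m = ν := by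
  have hsyl : (Ω - algebraMap K _ ν) * W = W * Ω := by
    rw [sub_mul, Algebra.algebraMap_eq_smul_one, smul_mul_assoc, one_mul, ← h, sub_sub_cancel]
  obtain ⟨μ, hμ, hμΩ⟩ := exists_mem_spectrum_of_mul_eq_mul hW hsyl
  rw [← spectrum.sub_singleton_eq, Set.mem_sub] at hμ
  obtain ⟨l, hl, _, rfl, rfl⟩ := hμ
  exact ⟨l, hl, _, hμΩ, sub_sub_cancel _ _⟩

end Matrix

theorem Module.End.exists_hasEigenvector_mem_ker_of_commute {K V : Type*} [Field K]
    [IsAlgClosed K] [AddCommGroup V] [Module K V] [FiniteDimensional K V] {f g : Module.End K V}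
    (hfg : Commute f g) (hg : LinearMap.ker g ≠ ⊥) :
    ∃ μ v, f.HasEigenvector μ v ∧ v ∈ LinearMap.ker g := by
  have hmaps : ∀ v ∈ LinearMap.ker g, f v ∈ LinearMap.ker g := fun v hv => by
    rw [LinearMap.mem_ker] at hv ⊢
    rw [← Module.End.mul_apply, ← hfg.eq, Module.End.mul_apply, hv, map_zero]
  have : Nontrivial (LinearMap.ker g) := Submodule.nontrivial_iff_ne_bot.mpr hg
  obtain ⟨μ, hμ⟩ := Module.End.exists_eigenvalue (f.restrict hmaps)
  obtain ⟨v, hv⟩ := hμ.exists_hasEigenvector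
  refine ⟨μ, v, ⟨?_, ?_⟩, v.2⟩
  · simpa [LinearMap.restrict_apply] using congrArg Subtype.val hv.apply_eq_smul
  · exact_mod_cast hv.2

section ExpSubOneDiv

variable {𝔸 : Type*} [NormedRing 𝔸] [NormedAlgebra ℝ 𝔸]

noncomputable def expSubOneDiv (a : 𝔸) : 𝔸 := ∑' k : ℕ, ((1 : ℝ) / (k + 1)!) • a ^ k

theorem summable_expSubOneDiv [CompleteSpace 𝔸] (a : 𝔸) :
    Summable fun k : ℕ => ((1 : ℝ) / (k + 1)!) • a ^ k := by
  refine .of_norm_bounded (NormedSpace.norm_expSeries_summable' (𝕂 := ℝ) a) fun k => ?_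
  rw [norm_smul, norm_smul, one_div]
  gcongr
  rw [Real.norm_of_nonneg (by positivity), Real.norm_of_nonneg (by positivity)]
  gcongr
  exact k.le_succ

theorem expSubOneDiv_zero : expSubOneDiv (0 : 𝔸) = 1 := by
  rw [expSubOneDiv, tsum_eq_single 0 fun k hk => by simp [zero_pow hk]]
  simp

theorem commute_expSubOneDiv (a : 𝔸) : Commute a (expSubOneDiv a) :=
  .tsum_right a fun k => ((Commute.refl a).pow_right k).smul_right _

theorem mul_expSubOneDiv [CompleteSpace 𝔸] (a : 𝔸) :
    a * expSubOneDiv a = NormedSpace.exp a - 1 := by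
  rw [congrFun (NormedSpace.exp_eq_tsum ℝ) a,
    (NormedSpace.expSeries_summable' (𝕂 := ℝ) a).tsum_eq_zero_add, expSubOneDiv,
    ← (summable_expSubOneDiv a).tsum_mul_left]
  simp [pow_succ', one_div]

end ExpSubOneDiv

theorem Complex.exists_int_of_expSubOneDiv_eq_zero {z : ℂ} (h : expSubOneDiv z = 0) :
    ∃ m : ℤ, m ≠ 0 ∧ z = 2 * Real.pi * I * m := by
  have hexp : exp z = 1 := by
    rw [exp_eq_exp_ℂ, ← sub_eq_zero, ← mul_expSubOneDiv, h, mul_zero]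
  obtain ⟨m, rfl⟩ := exp_eq_one_iff.mp hexp
  refine ⟨m, ?_, mul_comm _ _⟩
  rintro rfl
  simp [expSubOneDiv_zero] at h

namespace ContinuousLinearMap

variable {E : Type*} [NormedAddCommGroup E] [NormedSpace ℂ E] [CompleteSpace E]

theorem expSubOneDiv_apply [NormedSpace ℝ E] [IsScalarTower ℝ ℂ E] (T : E →L[ℂ] E) (x : E) :
    expSubOneDiv T x = ∑' k : ℕ, ((1 : ℝ) / (k + 1)!) • (T ^ k) x := by
  simpa [expSubOneDiv] using (apply ℂ E x).map_tsum (summable_expSubOneDiv T)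

theorem expSubOneDiv_apply_of_eq_smul {T : E →L[ℂ] E} {ν : ℂ} {w : E} (h : T w = ν • w) :
    expSubOneDiv T w = expSubOneDiv ν • w := by
  have hpow (k : ℕ) : (T ^ k) w = ν ^ k • w := by
    induction k with
    | zero => simp
    | succ k ih => rw [pow_succ', mul_apply_eq_comp, ih, map_smul, h, smul_smul, pow_succ]
  rw [expSubOneDiv_apply, expSubOneDiv, ← (summable_expSubOneDiv ν).tsum_smul_const w]
  simp_rw [hpow, smul_assoc]

theorem injective_expSubOneDiv [FiniteDimensional ℂ E] {T : E →L[ℂ] E}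
    (hT : ∀ ν : ℂ, Module.End.HasEigenvalue (T : Module.End ℂ E) ν →
      ∀ m : ℤ, m ≠ 0 → ν ≠ 2 * Real.pi * Complex.I * m) :
    Function.Injective ⇑(expSubOneDiv T) := by
  rw [← coe_coe, ← LinearMap.ker_eq_bot]
  by_contra hker
  have hcomm : Commute (T : Module.End ℂ E) ((expSubOneDiv T : E →L[ℂ] E) : Module.End ℂ E) :=
    (commute_expSubOneDiv T).map toLinearMapRingHom
  obtain ⟨ν, w, hw, hwker⟩ := Module.End.exists_hasEigenvector_mem_ker_of_commute hcomm hker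
  have hν : expSubOneDiv ν = 0 := by
    rw [LinearMap.mem_ker, coe_coe, expSubOneDiv_apply_of_eq_smul hw.apply_eq_smul] at hwker
    exact (smul_eq_zero.mp hwker).resolve_right hw.2
  obtain ⟨m, hm, rfl⟩ := Complex.exists_int_of_expSubOneDiv_eq_zero hν
  exact hT _ (Module.End.hasEigenvalue_of_hasEigenvector hw) m hm rfl

end ContinuousLinearMap

section MatrixAd

attribute [local instance] Matrix.normedAddCommGroup Matrix.normedSpace
-- `E →L[ℂ] E` is a normed algebra only when the topology of `E` is literally the one of its norm.
attribute [-instance] instTopologicalSpaceMatrix Matrix.instUniformSpace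

namespace Matrix

variable {ι : Type*} [Fintype ι] [DecidableEq ι]

noncomputable def adCLM (Ω : Matrix ι ι ℂ) : Matrix ι ι ℂ →L[ℂ] Matrix ι ι ℂ :=
  LinearMap.toContinuousLinearMap (LinearMap.mulLeft ℂ Ω - LinearMap.mulRight ℂ Ω)

theorem exists_sub_eq_of_hasEigenvalue_adCLM {Ω : Matrix ι ι ℂ} {ν : ℂ}
    (hν : Module.End.HasEigenvalue (Ω.adCLM : Module.End ℂ (Matrix ι ι ℂ)) ν) :
    ∃ l ∈ spectrum ℂ Ω, ∃ m ∈ spectrum ℂ Ω, l - m = ν := by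
  obtain ⟨W, hW⟩ := hν.exists_hasEigenvector
  exact exists_sub_eq_of_mul_sub_mul_eq_smul hW.2 hW.apply_eq_smul

theorem tsum_iterate_ad_eq_expSubOneDiv (Ω : Matrix ι ι ℂ) :
    (fun X : Matrix ι ι ℂ =>
      ∑' k : ℕ, ((1 : ℝ) / (k + 1)!) • (fun Y : Matrix ι ι ℂ => Ω * Y - Y * Ω)^[k] X) =
      expSubOneDiv Ω.adCLM := by
  ext1 X
  simp_rw [ContinuousLinearMap.expSubOneDiv_apply, FunLike.coe_pow_eq_iterate]
  rfl

theorem bijective_expSubOneDiv_adCLM {Ω : Matrix ι ι ℂ}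
    (h : ∀ l ∈ spectrum ℂ Ω, ∀ m ∈ spectrum ℂ Ω,
      ∀ k : ℤ, k ≠ 0 → l - m ≠ 2 * Real.pi * Complex.I * k) :
    Function.Bijective ⇑(expSubOneDiv Ω.adCLM) := by
  have hinj : Function.Injective ⇑(expSubOneDiv Ω.adCLM) :=
    ContinuousLinearMap.injective_expSubOneDiv fun ν hν => by
      obtain ⟨l, hl, m, hm, rfl⟩ := exists_sub_eq_of_hasEigenvalue_adCLM hν
      exact h l hl m hm
  exact ⟨hinj, LinearMap.injective_iff_surjective.mp hinj⟩

end Matrix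

end MatrixAd

/-- If no difference of two eigenvalues of `Ω` equals `2πim` for a nonzero integer `m`, then
`d exp_Ω : X ↦ ∑' k, (1/(k+1)!) • ad_Ω^k X` is bijective on `n×n` complex matrices. -/
theorem dexp_bijective {n : ℕ} (Ω : Matrix (Fin n) (Fin n) ℂ)
    (h : ∀ lam mu : ℂ, Ω.charpoly.IsRoot lam → Ω.charpoly.IsRoot mu →
      ∀ m : ℤ, m ≠ 0 → lam - mu ≠ 2 * Real.pi * Complex.I * m) :
    Function.Bijective (fun X : Matrix (Fin n) (Fin n) ℂ =>
      ∑' k : ℕ, ((1 : ℝ) / (Nat.factorial (k + 1))) •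
        (fun Y : Matrix (Fin n) (Fin n) ℂ => Ω * Y - Y * Ω)^[k] X) := by
  have hbij := Matrix.bijective_expSubOneDiv_adCLM (Ω := Ω) fun l hl m hm =>
    h l m (Matrix.mem_spectrum_iff_isRoot_charpoly.mp hl)
      (Matrix.mem_spectrum_iff_isRoot_charpoly.mp hm)
  rwa [← Matrix.tsum_iterate_ad_eq_expSubOneDiv] at hbij
end
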